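/- arXiv:1708.08883 — 2 statements merged into one kernel-verified Lean document; each statement's English description precedes it below -/
import Mathlib

section
/- Let $E$ be a Hausdorff, sequentially complete locally convex space with topology determined by a family of seminorms $Q$, and let $C \subseteq E$ be a nonempty closed convex bounded set. Let $(F_n)$ be a descending sequence of nonempty subsets of $C$, each the range of a $Q$-nonexpansive retraction $r_n : C \to F_n$. Then there exists a $Q$-nonexpansive mapping $r : C \to C$ with $\mathrm{Fix}(r) = \bigcap_{n=1}^\infty F_n$. -/
open Filter Topology

private lemma sem_sum_le {E : Type*} [AddCommGroup E] [Module ℝ E]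
    (q : Seminorm ℝ E) (s : Finset ℕ) (f : ℕ → E) :
    q (∑ k ∈ s, f k) ≤ ∑ k ∈ s, q (f k) := by
  classical
  induction s using Finset.induction_on with
  | empty => simp
  | @insert a s h ih =>
    rw [Finset.sum_insert h, Finset.sum_insert h]
    exact (map_add_le_add q _ _).trans (by linarith)

private lemma geom_partial (N : ℕ) :
    ∑ k ∈ Finset.range N, (2⁻¹:ℝ)^(k+1) = 1 - (2⁻¹:ℝ)^N := by
  induction N with
  | zero => simp
  | succ n ih => rw [Finset.sum_range_succ, ih, pow_succ]; ring

/-- Bruck's lemma in sequentially complete Hausdorff locally convex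
spaces: a descending sequence of nonempty `Q`-nonexpansive retracts of a nonempty
closed convex bounded set `C` is the fixed point set of a single `Q`-nonexpansive
self-map of `C`. -/
theorem stmt_8 {E : Type*} [AddCommGroup E] [Module ℝ E] [TopologicalSpace E]
    [IsTopologicalAddGroup E] [ContinuousSMul ℝ E] [T2Space E] {ι : Type*} [Nonempty ι]
    (Q : SeminormFamily ℝ E ι) (hQ : WithSeminorms Q)
    (hseqcomp : ∀ f : ℕ → E,
      (∀ V ∈ nhds (0 : E), ∃ N : ℕ, ∀ m ≥ N, ∀ n ≥ N, f m - f n ∈ V) →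
      ∃ x, Tendsto f atTop (𝓝 x))
    (C : Set E) (hCne : C.Nonempty) (hCcl : IsClosed C) (hCco : Convex ℝ C)
    (hCbd : Bornology.IsVonNBounded ℝ C)
    (F : ℕ → Set E) (hFne : ∀ n, (F n).Nonempty) (hFC : ∀ n, F n ⊆ C)
    (hFdesc : ∀ n, F (n + 1) ⊆ F n)
    (r : ℕ → E → E) (hrC : ∀ n, Set.MapsTo (r n) C (F n))
    (hrretr : ∀ n, ∀ x ∈ F n, r n x = x)
    (hrne : ∀ n, ∀ x ∈ C, ∀ y ∈ C, ∀ i : ι, Q i (r n x - r n y) ≤ Q i (x - y)) :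
    ∃ ρ : E → E, Set.MapsTo ρ C C ∧
      (∀ x ∈ C, ∀ y ∈ C, ∀ i : ι, Q i (ρ x - ρ y) ≤ Q i (x - y)) ∧
      {x ∈ C | ρ x = x} = ⋂ n, F n := by
  classical
  set w : ℕ → ℝ := fun k => (2⁻¹ : ℝ) ^ (k + 1) with hw
  have hw_pos : ∀ k, 0 < w k := fun k => by positivity
  have hw_sum : ∀ N, ∑ k ∈ Finset.range N, w k = 1 - (2⁻¹:ℝ)^N := geom_partial
  have hpowpos : ∀ n : ℕ, (0:ℝ) < (2⁻¹:ℝ)^n := fun n => pow_pos (by norm_num) n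
  have hpowle1 : ∀ n : ℕ, (2⁻¹:ℝ)^n ≤ 1 :=
    fun n => pow_le_one₀ (by norm_num) (by norm_num)
  have hpowtend : Tendsto (fun N : ℕ => (2⁻¹:ℝ)^N) atTop (𝓝 0) :=
    tendsto_pow_atTop_nhds_zero_of_lt_one (by norm_num) (by norm_num)
  set S : ℕ → E → E := fun N x => ∑ k ∈ Finset.range N, w k • r k x with hS
  have hFdesc' : ∀ m n, m ≤ n → F n ⊆ F m := by
    intro m n h
    induction n, h using Nat.le_induction with
    | base => exact subset_rfl
    | succ n hn ih => exact (hFdesc n).trans ih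
  have hrmem : ∀ n x, x ∈ C → r n x ∈ C := fun n x hx => hFC n (hrC n hx)
  -- Cauchy estimate
  have hest : ∀ (q : Seminorm ℝ E) (M : ℝ), (∀ z ∈ C, q z ≤ M) →
      ∀ x ∈ C, ∀ n m : ℕ, n ≤ m → q (S m x - S n x) ≤ (2⁻¹:ℝ)^n * M := by
    intro q M hM x hx n m hnm
    have hM0 : 0 ≤ M := le_trans (apply_nonneg q _) (hM _ (hrmem 0 x hx))
    have hdiff : S m x - S n x = ∑ k ∈ Finset.Ico n m, w k • r k x := by
      rw [hS]
      exact (Finset.sum_Ico_eq_sub _ hnm).symm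
    rw [hdiff]
    calc q (∑ k ∈ Finset.Ico n m, w k • r k x)
        ≤ ∑ k ∈ Finset.Ico n m, q (w k • r k x) := sem_sum_le q _ _
      _ ≤ ∑ k ∈ Finset.Ico n m, w k * M := by
          refine Finset.sum_le_sum fun k _ => ?_
          rw [map_smul_eq_mul, Real.norm_eq_abs, abs_of_pos (hw_pos k)]
          exact mul_le_mul_of_nonneg_left (hM _ (hrmem k x hx)) (le_of_lt (hw_pos k))
      _ = ((2⁻¹:ℝ)^n - (2⁻¹:ℝ)^m) * M := by
          rw [← Finset.sum_mul, Finset.sum_Ico_eq_sub _ hnm, hw_sum, hw_sum]; ring_nf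
      _ ≤ (2⁻¹:ℝ)^n * M := by
          have := hpowpos m; nlinarith
  -- convergence
  have hconv : ∀ x ∈ C, ∃ y, Tendsto (fun N => S N x) atTop (𝓝 y) := by
    intro x hx
    apply hseqcomp
    intro V hV
    obtain ⟨U, hU, hUV⟩ := hQ.hasBasis.mem_iff.mp hV
    obtain ⟨I, ε, hε, rfl⟩ := Q.basisSets_iff.mp hU
    obtain ⟨M, hM0, hMC⟩ := hQ.isVonNBounded_iff_finset_seminorm_bounded.mp hCbd I
    obtain ⟨N, hN⟩ := exists_pow_lt_of_lt_one (div_pos hε hM0) (by norm_num : (2⁻¹:ℝ) < 1)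
    refine ⟨N, fun m hm n hn => ?_⟩
    have key : ∀ a b : ℕ, N ≤ a → a ≤ b → S b x - S a x ∈ (I.sup Q).ball 0 ε := by
      intro a b ha hab
      rw [Seminorm.mem_ball_zero]
      calc (I.sup Q) (S b x - S a x) ≤ (2⁻¹:ℝ)^a * M :=
            hest (I.sup Q) M (fun z hz => le_of_lt (hMC z hz)) x hx a b hab
        _ ≤ (2⁻¹:ℝ)^N * M := by
            have : (2⁻¹:ℝ)^a ≤ (2⁻¹:ℝ)^N :=
              pow_le_pow_of_le_one (by norm_num) (by norm_num) ha
            nlinarith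
        _ < ε := (lt_div_iff₀ hM0).mp hN
    rcases le_total n m with h | h
    · exact hUV (key n m hn h)
    · have := key m n hm h
      rw [← neg_sub, Seminorm.mem_ball_zero, map_neg_eq_map, ← Seminorm.mem_ball_zero] at this
      exact hUV this
  -- define rho
  have hpowlt1 : ∀ n : ℕ, (2⁻¹:ℝ)^(n+1) < 1 := by
    intro n
    calc (2⁻¹:ℝ)^(n+1) ≤ (2⁻¹:ℝ)^1 :=
          pow_le_pow_of_le_one (by norm_num) (by norm_num) (Nat.le_add_left 1 n)
      _ < 1 := by norm_num
  let ρ : E → E := fun x => if hx : x ∈ C then Classical.choose (hconv x hx) else x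
  have hρ : ∀ x, ∀ hx : x ∈ C, Tendsto (fun N => S N x) atTop (𝓝 (ρ x)) := by
    intro x hx
    have hd : ρ x = Classical.choose (hconv x hx) := dif_pos hx
    rw [hd]
    exact Classical.choose_spec (hconv x hx)
  -- partial normalized sums lie in C
  have hmemC : ∀ x ∈ C, ∀ N : ℕ, (1 - (2⁻¹:ℝ)^(N+1))⁻¹ • S (N+1) x ∈ C := by
    intro x hx N
    induction N with
    | zero =>
      have h1 : S 1 x = (2⁻¹:ℝ) • r 0 x := by simp [hS, hw]
      rw [h1, smul_smul]
      norm_num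
      exact hrmem 0 x hx
    | succ n ih =>
      have hne : (1 - (2⁻¹:ℝ)^(n+1)) ≠ 0 := by have := hpowlt1 n; linarith
      have hne' : (1 - (2⁻¹:ℝ)^(n+2)) ≠ 0 := by have := hpowlt1 (n+1); linarith
      have hpos : (0:ℝ) < 1 - (2⁻¹:ℝ)^(n+1) := by have := hpowlt1 n; linarith
      have hpos' : (0:ℝ) < 1 - (2⁻¹:ℝ)^(n+2) := by have := hpowlt1 (n+1); linarith
      obtain ⟨c, hgen⟩ : ∃ c, (1 - (2⁻¹:ℝ)^(n+1))⁻¹ • S (n+1) x = c := ⟨_, rfl⟩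
      rw [hgen] at ih
      have hrec : S (n+2) x = (1 - (2⁻¹:ℝ)^(n+1)) • c + w (n+1) • r (n+1) x := by
        rw [← hgen, smul_inv_smul₀ hne]
        exact Finset.sum_range_succ _ _
      show (1 - (2⁻¹:ℝ)^(n+2))⁻¹ • S (n+2) x ∈ C
      rw [hrec, smul_add, smul_smul, smul_smul]
      refine hCco ih (hrmem (n+1) x hx) ?_ ?_ ?_
      · positivity
      · have := hw_pos (n+1)
        positivity
      · have hwval : w (n+1) = (2⁻¹:ℝ)^(n+2) := rfl
        have hps : (2⁻¹:ℝ)^(n+2) = (2⁻¹:ℝ)^(n+1) * 2⁻¹ := pow_succ _ _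
        rw [hwval, ← mul_add]
        have h9 : (1 - (2⁻¹:ℝ)^(n+1)) + (2⁻¹:ℝ)^(n+2) = 1 - (2⁻¹:ℝ)^(n+2) := by
          rw [hps]; ring
        rw [h9]
        exact inv_mul_cancel₀ hne'
  have hmaps : Set.MapsTo ρ C C := by
    intro x hx
    have h1 : Tendsto (fun N : ℕ => (1 - (2⁻¹:ℝ)^(N+1))⁻¹) atTop (𝓝 1) := by
      have h0 : Tendsto (fun N : ℕ => (2⁻¹:ℝ)^(N+1)) atTop (𝓝 0) :=
        hpowtend.comp (tendsto_add_atTop_nat 1)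
      have h2 : Tendsto (fun N : ℕ => 1 - (2⁻¹:ℝ)^(N+1)) atTop (𝓝 1) := by
        simpa using tendsto_const_nhds.sub h0
      have h3 := h2.inv₀ (by norm_num : (1:ℝ) ≠ 0)
      simpa using h3
    have h2 : Tendsto (fun N => S (N+1) x) atTop (𝓝 (ρ x)) :=
      (hρ x hx).comp (tendsto_add_atTop_nat 1)
    have hc : Tendsto (fun N : ℕ => (1 - (2⁻¹:ℝ)^(N+1))⁻¹ • S (N+1) x) atTop (𝓝 (ρ x)) := by
      have := h1.smul h2
      simpa using this
    exact hCcl.mem_of_tendsto hc (Eventually.of_forall fun N => hmemC x hx N)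
  have hnonexp : ∀ x ∈ C, ∀ y ∈ C, ∀ i : ι, Q i (ρ x - ρ y) ≤ Q i (x - y) := by
    intro x hx y hy i
    have hqc : Continuous (Q i) := hQ.continuous_seminorm i
    have h1 : Tendsto (fun N => Q i (S N x - S N y)) atTop (𝓝 (Q i (ρ x - ρ y))) :=
      (hqc.tendsto _).comp ((hρ x hx).sub (hρ y hy))
    refine le_of_tendsto h1 (Eventually.of_forall fun N => ?_)
    have hdiff : S N x - S N y = ∑ k ∈ Finset.range N, w k • (r k x - r k y) := by
      rw [hS]
      simp only
      rw [← Finset.sum_sub_distrib]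
      exact Finset.sum_congr rfl fun k _ => (smul_sub _ _ _).symm
    calc Q i (S N x - S N y) ≤ ∑ k ∈ Finset.range N, Q i (w k • (r k x - r k y)) := by
          rw [hdiff]; exact sem_sum_le _ _ _
      _ ≤ ∑ k ∈ Finset.range N, w k * Q i (x - y) := by
          refine Finset.sum_le_sum fun k _ => ?_
          rw [map_smul_eq_mul, Real.norm_eq_abs, abs_of_pos (hw_pos k)]
          exact mul_le_mul_of_nonneg_left (hrne k x hx y hy i) (le_of_lt (hw_pos k))
      _ = (1 - (2⁻¹:ℝ)^N) * Q i (x - y) := by rw [← Finset.sum_mul, hw_sum]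
      _ ≤ Q i (x - y) := by nlinarith [hpowpos N, apply_nonneg (Q i) (x - y)]
  refine ⟨ρ, hmaps, hnonexp, ?_⟩
  ext z
  simp only [Set.mem_setOf_eq, Set.mem_iInter]
  constructor
  · rintro ⟨hzC, hfix⟩ n
    have hSz : Tendsto (fun N => S N z) atTop (𝓝 z) := by
      have := hρ z hzC
      rwa [hfix] at this
    have hzero : ∀ i : ι, ∀ m : ℕ, Q i (z - r m z) = 0 := by
      intro i
      obtain ⟨M, hM0, hMC⟩ := hQ.isVonNBounded_iff_seminorm_bounded.mp hCbd i
      set q := Q i with hqdef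
      set a : ℕ → ℝ := fun m => q (z - r m z) with ha
      have hab : ∀ m, a m ≤ 2*M := by
        intro m
        have h1 := map_sub_le_add q z (r m z)
        have h2 := le_of_lt (hMC z hzC)
        have h3 := le_of_lt (hMC _ (hrmem m z hzC))
        calc a m ≤ q z + q (r m z) := h1
          _ ≤ 2*M := by linarith
      have hbddA : BddAbove (Set.range a) := ⟨2*M, by rintro _ ⟨m, rfl⟩; exact hab m⟩
      set s := ⨆ m, a m with hsdef
      have hle_s : ∀ m, a m ≤ s := fun m => le_ciSup hbddA m
      have hs0 : 0 ≤ s := le_trans (apply_nonneg q _) (hle_s 0)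
      have e1 : ∀ m k : ℕ, k < m → q (r k z - r m z) ≤ a m := by
        intro m k hk
        have hFm : r m z ∈ F k := hFdesc' k m (le_of_lt hk) (hrC m hzC)
        have hfixk : r k (r m z) = r m z := hrretr k _ hFm
        calc q (r k z - r m z) = q (r k z - r k (r m z)) := by rw [hfixk]
          _ ≤ q (z - r m z) := hrne k z hzC (r m z) (hrmem m z hzC) i
      have e2 : ∀ m k : ℕ, m + 1 ≤ k → q (r k z - r m z) ≤ s := by
        intro m k hk
        have hFk : r k z ∈ F m := hFdesc' m k (le_trans (Nat.le_succ m) hk) (hrC k hzC)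
        have hfixm : r m (r k z) = r k z := hrretr m _ hFk
        calc q (r k z - r m z) = q (r m (r k z) - r m z) := by rw [hfixm]
          _ ≤ q (r k z - z) := hrne m (r k z) (hrmem k z hzC) z hzC i
          _ = q (z - r k z) := map_sub_rev q _ _
          _ ≤ s := hle_s k
      have key : ∀ m, a m ≤ (1 - (2⁻¹:ℝ)^m) * a m + (2⁻¹:ℝ)^(m+1) * s := by
        intro m
        have hq0 : Tendsto (fun N => q (z - S N z)) atTop (𝓝 0) := by
          have := ((hQ.continuous_seminorm i).tendsto _).comp
            ((tendsto_const_nhds : Tendsto (fun _ : ℕ => z) atTop (𝓝 z)).sub hSz)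
          simpa [hqdef, Function.comp_def] using this
        have hMt : Tendsto (fun N : ℕ => (2⁻¹:ℝ)^N * M) atTop (𝓝 0) := by
          simpa using hpowtend.mul_const M
        have hlim : Tendsto
            (fun N => q (z - S N z) + (2⁻¹:ℝ)^N * M
              + ((1 - (2⁻¹:ℝ)^m) * a m + (2⁻¹:ℝ)^(m+1) * s)) atTop
            (𝓝 ((1 - (2⁻¹:ℝ)^m) * a m + (2⁻¹:ℝ)^(m+1) * s)) := by
          have := (hq0.add hMt).add_const ((1 - (2⁻¹:ℝ)^m) * a m + (2⁻¹:ℝ)^(m+1) * s)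
          simpa using this
        refine ge_of_tendsto hlim ?_
        filter_upwards [eventually_ge_atTop (m+1)] with N hN
        have ht3 : q ((1-(2⁻¹:ℝ)^N) • r m z - r m z) ≤ (2⁻¹:ℝ)^N * M := by
          have hid : (1-(2⁻¹:ℝ)^N) • r m z - r m z = -((2⁻¹:ℝ)^N • r m z) := by
            rw [sub_smul, one_smul]; abel
          rw [hid, map_neg_eq_map, map_smul_eq_mul, Real.norm_eq_abs,
            abs_of_pos (hpowpos N)]
          exact mul_le_mul_of_nonneg_left (le_of_lt (hMC _ (hrmem m z hzC)))
            (le_of_lt (hpowpos N))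
        have ht2 : q (S N z - (1-(2⁻¹:ℝ)^N) • r m z)
            ≤ (1-(2⁻¹:ℝ)^m) * a m + (2⁻¹:ℝ)^(m+1) * s := by
          have hrepr : S N z - (1-(2⁻¹:ℝ)^N) • r m z
              = ∑ k ∈ Finset.range N, w k • (r k z - r m z) := by
            rw [hS]
            simp only
            rw [← hw_sum N, Finset.sum_smul, ← Finset.sum_sub_distrib]
            exact Finset.sum_congr rfl fun k _ => (smul_sub _ _ _).symm
          rw [hrepr]
          have hA : ∑ k ∈ Finset.range (m+1), w k * q (r k z - r m z)
              ≤ (1-(2⁻¹:ℝ)^m) * a m := by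
            rw [Finset.sum_range_succ]
            have hz0 : w m * q (r m z - r m z) = 0 := by simp
            rw [hz0, add_zero]
            calc ∑ k ∈ Finset.range m, w k * q (r k z - r m z)
                ≤ ∑ k ∈ Finset.range m, w k * a m :=
                  Finset.sum_le_sum fun k hk =>
                    mul_le_mul_of_nonneg_left (e1 m k (Finset.mem_range.mp hk))
                      (le_of_lt (hw_pos k))
              _ = (1-(2⁻¹:ℝ)^m) * a m := by rw [← Finset.sum_mul, hw_sum]
          have hB : ∑ k ∈ Finset.Ico (m+1) N, w k * q (r k z - r m z)
              ≤ (2⁻¹:ℝ)^(m+1) * s := by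
            calc ∑ k ∈ Finset.Ico (m+1) N, w k * q (r k z - r m z)
                ≤ ∑ k ∈ Finset.Ico (m+1) N, w k * s :=
                  Finset.sum_le_sum fun k hk =>
                    mul_le_mul_of_nonneg_left (e2 m k (Finset.mem_Ico.mp hk).1)
                      (le_of_lt (hw_pos k))
              _ = ((2⁻¹:ℝ)^(m+1) - (2⁻¹:ℝ)^N) * s := by
                  rw [← Finset.sum_mul, Finset.sum_Ico_eq_sub _ hN, hw_sum, hw_sum]
                  ring_nf
              _ ≤ (2⁻¹:ℝ)^(m+1) * s := by nlinarith [hpowpos N]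
          calc q (∑ k ∈ Finset.range N, w k • (r k z - r m z))
              ≤ ∑ k ∈ Finset.range N, q (w k • (r k z - r m z)) := sem_sum_le _ _ _
            _ = ∑ k ∈ Finset.range N, w k * q (r k z - r m z) :=
                Finset.sum_congr rfl fun k _ => by
                  rw [map_smul_eq_mul, Real.norm_eq_abs, abs_of_pos (hw_pos k)]
            _ = ∑ k ∈ Finset.range (m+1), w k * q (r k z - r m z)
                + ∑ k ∈ Finset.Ico (m+1) N, w k * q (r k z - r m z) := by
                rw [Finset.range_eq_Ico,
                  ← Finset.sum_Ico_consecutive _ (Nat.zero_le (m+1)) hN,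
                  ← Finset.range_eq_Ico]
            _ ≤ (1-(2⁻¹:ℝ)^m) * a m + (2⁻¹:ℝ)^(m+1) * s := add_le_add hA hB
        have hdec : a m ≤ q (z - S N z) + (q (S N z - (1-(2⁻¹:ℝ)^N) • r m z)
            + q ((1-(2⁻¹:ℝ)^N) • r m z - r m z)) := by
          have hid : z - r m z = (z - S N z) + ((S N z - (1-(2⁻¹:ℝ)^N) • r m z)
              + ((1-(2⁻¹:ℝ)^N) • r m z - r m z)) := by abel
          calc a m = q (z - r m z) := rfl
            _ = q ((z - S N z) + ((S N z - (1-(2⁻¹:ℝ)^N) • r m z)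
                + ((1-(2⁻¹:ℝ)^N) • r m z - r m z))) := by rw [← hid]
            _ ≤ q (z - S N z) + q ((S N z - (1-(2⁻¹:ℝ)^N) • r m z)
                + ((1-(2⁻¹:ℝ)^N) • r m z - r m z)) := map_add_le_add q _ _
            _ ≤ q (z - S N z) + (q (S N z - (1-(2⁻¹:ℝ)^N) • r m z)
                + q ((1-(2⁻¹:ℝ)^N) • r m z - r m z)) := by
                have := map_add_le_add q (S N z - (1-(2⁻¹:ℝ)^N) • r m z)
                  ((1-(2⁻¹:ℝ)^N) • r m z - r m z)
                linarith
        calc a m ≤ q (z - S N z) + (q (S N z - (1-(2⁻¹:ℝ)^N) • r m z)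
              + q ((1-(2⁻¹:ℝ)^N) • r m z - r m z)) := hdec
          _ ≤ q (z - S N z) + (((1-(2⁻¹:ℝ)^m) * a m + (2⁻¹:ℝ)^(m+1) * s)
              + (2⁻¹:ℝ)^N * M) := by
              have := add_le_add ht2 ht3
              linarith
          _ = q (z - S N z) + (2⁻¹:ℝ)^N * M
              + ((1 - (2⁻¹:ℝ)^m) * a m + (2⁻¹:ℝ)^(m+1) * s) := by ring
      have hhalf : ∀ m, a m ≤ s/2 := by
        intro m
        have hk := key m
        have hp := hpowpos m
        have hps : (2⁻¹:ℝ)^(m+1) = (2⁻¹:ℝ)^m * 2⁻¹ := pow_succ _ _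
        rw [hps] at hk
        have hmul : (2⁻¹:ℝ)^m * a m ≤ (2⁻¹:ℝ)^m * (s/2) := by nlinarith
        exact le_of_mul_le_mul_left hmul hp
      have hs_le : s ≤ s/2 := ciSup_le hhalf
      have hs_eq : s = 0 := le_antisymm (by linarith) hs0
      intro m
      have h1 : a m ≤ 0 := by
        have := hhalf m
        rw [hs_eq] at this
        linarith
      exact le_antisymm h1 (apply_nonneg q _)
    have hv : z - r n z = 0 := by
      by_contra h
      obtain ⟨i, hi⟩ := hQ.separating_of_T1 _ h
      exact hi (hzero i n)
    have hzr : z = r n z := by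
      have := sub_eq_zero.mp hv
      exact this
    rw [hzr]
    exact hrC n hzC
  · intro hz
    have hzC : z ∈ C := hFC 0 (hz 0)
    refine ⟨hzC, ?_⟩
    have h1 : ∀ N, S N z = (1 - (2⁻¹:ℝ)^N) • z := by
      intro N
      rw [hS]
      simp only
      calc ∑ k ∈ Finset.range N, w k • r k z
          = ∑ k ∈ Finset.range N, w k • z :=
            Finset.sum_congr rfl fun k _ => by rw [hrretr k z (hz k)]
        _ = (∑ k ∈ Finset.range N, w k) • z := (Finset.sum_smul).symm
        _ = (1 - (2⁻¹:ℝ)^N) • z := by rw [hw_sum]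
    have h2 : Tendsto (fun N => S N z) atTop (𝓝 z) := by
      simp_rw [h1]
      have h3 : Tendsto (fun N : ℕ => (1 - (2⁻¹:ℝ)^N)) atTop (𝓝 1) := by
        simpa using tendsto_const_nhds.sub hpowtend
      have h4 := h3.smul (tendsto_const_nhds : Tendsto (fun _ : ℕ => z) atTop (𝓝 z))
      simpa using h4
    exact tendsto_nhds_unique (hρ z hzC) h2
end

section
/- Let $C$ be a set, $T_1, \dots, T_{n+1} : C \to C$ pairwise commuting mappings, and let $R : C \to \bigcap_{j=1}^n \mathrm{Fix}(T_j)$ be a retraction (i.e., $R(x) = x$ for all $x \in \bigcap_{j=1}^n \mathrm{Fix}(T_j)$). Then $\mathrm{Fix}(T_{n+1} \circ R) = \bigcap_{j=1}^{n+1} \mathrm{Fix}(T_j)$. -/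
/-- for commuting maps `T₁, …, T_{n+1}` and a retraction `R` onto
`⋂_{j ≤ n} Fix(T_j)`, one has `Fix(T_{n+1} ∘ R) = ⋂_{j ≤ n+1} Fix(T_j)`. -/
theorem stmt_9 {C : Type*} (n : ℕ) (T : Fin (n + 1) → C → C)
    (hcomm : ∀ i j : Fin (n + 1), T i ∘ T j = T j ∘ T i)
    (R : C → C)
    (hRrange : ∀ x : C, ∀ j : Fin n, T j.castSucc (R x) = R x)
    (hRretr : ∀ x : C, (∀ j : Fin n, T j.castSucc x = x) → R x = x) :
    {x : C | T (Fin.last n) (R x) = x} = {x : C | ∀ j : Fin (n + 1), T j x = x} := by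
  ext x
  simp only [Set.mem_setOf_eq]
  constructor
  · intro hx
    have hfix : ∀ j : Fin n, T j.castSucc x = x := by
      intro j
      calc T j.castSucc x = T j.castSucc (T (Fin.last n) (R x)) := by rw [hx]
        _ = T (Fin.last n) (T j.castSucc (R x)) := congrFun (hcomm _ _) _
        _ = T (Fin.last n) (R x) := by rw [hRrange]
        _ = x := hx
    have hRx : R x = x := hRretr x hfix
    intro j
    rcases Fin.eq_castSucc_or_eq_last j with ⟨i, rfl⟩ | rfl
    · exact hfix i
    · rw [hRx] at hx; exact hx
  · intro h
    rw [hRretr x (fun j => h j.castSucc)]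
    exact h (Fin.last n)
end
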